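/- Let $\Pi : (0,\infty) \to [0,1]$ and $\epsilon : (0,\infty) \to [0,\infty)$ be measurable functions, $K, \lambda > 0$, and $s>0$. Assume: (a) $\Pi(10\alpha) \le K\Pi(\alpha)^2 + \lambda K \epsilon(\alpha)$ for all $\alpha > 0$; (b) $\Pi(\alpha) \le \lambda K \alpha^d$ for all $\alpha>0$; (c) $\Pi(\alpha) \to 0$ as $\alpha \to \infty$; (d) $\int_0^\infty \alpha^{s-1}\epsilon(\alpha)\,d\alpha < \infty$. Then $\int_0^\infty \alpha^{s-1}\Pi(\alpha)\,d\alpha < \infty$. -/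

import Mathlib

open MeasureTheory Set ENNReal Filter

lemma lint_scale10 (F : ℝ → ℝ≥0∞) (hF : Measurable F) (a b : ℝ) :
    ∫⁻ x in Ioc (10*a) (10*b), F x = 10 * ∫⁻ y in Ioc a b, F (10*y) := by
  have h0 : (10:ℝ) ≠ 0 := by norm_num
  have hpre : ((10:ℝ) * ·) ⁻¹' (Ioc (10*a) (10*b)) = Ioc a b := by
    ext x
    simp only [mem_preimage, mem_Ioc]
    constructor
    · rintro ⟨h1, h2⟩; constructor <;> nlinarith
    · rintro ⟨h1, h2⟩; constructor <;> nlinarith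
  have hmap : ∫⁻ y in Ioc a b, F (10*y)
      = ∫⁻ x, F x ∂((volume.restrict (Ioc a b)).map ((10:ℝ) * ·)) :=
    (lintegral_map hF (measurable_const_mul 10)).symm
  rw [hmap, ← hpre, ← Measure.restrict_map (measurable_const_mul 10) measurableSet_Ioc,
      Real.map_volume_mul_left h0, Measure.restrict_smul, lintegral_smul_measure, smul_eq_mul, ← mul_assoc]
  have : (10:ℝ≥0∞) * ENNReal.ofReal |(10:ℝ)⁻¹| = 1 := by
    rw [abs_of_pos (by norm_num : (0:ℝ) < 10⁻¹),
      show (10:ℝ≥0∞) = ENNReal.ofReal 10 by norm_num,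
      ← ENNReal.ofReal_mul (by norm_num)]
    norm_num
  rw [this, one_mul]

/-- Bootstrap lemma: the recursive inequality `Pi(10α) ≤ KPi(α)² + λKε(α)` together with
`Pi(α) ≤ λKα^d`, `Pi(α) → 0` and `∫ α^{s-1} ε(α) dα < ∞` implies
`∫ α^{s-1} Pi(α) dα < ∞`. -/
theorem stmt2 (d : ℕ) (hd : 1 ≤ d) (s : ℝ) (hs : 0 < s)
    (Pi : ℝ → ℝ) (ε : ℝ → ℝ) (hPim : Measurable Pi) (hεm : Measurable ε)
    (hPi0 : ∀ α, 0 < α → 0 ≤ Pi α) (hPi1 : ∀ α, 0 < α → Pi α ≤ 1)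
    (hε0 : ∀ α, 0 < α → 0 ≤ ε α)
    (K lam : ℝ) (hK : 0 < K) (hlam : 0 < lam)
    (hrec : ∀ α : ℝ, 0 < α → Pi (10 * α) ≤ K * (Pi α) ^ 2 + lam * K * ε α)
    (hsmall : ∀ α : ℝ, 0 < α → Pi α ≤ lam * K * α ^ (d : ℝ))
    (hlim : Tendsto Pi atTop (nhds 0))
    (hεint : ∫⁻ α in Ioi (0:ℝ), ENNReal.ofReal (α ^ (s - 1) * ε α) < ∞) :
    ∫⁻ α in Ioi (0:ℝ), ENNReal.ofReal (α ^ (s - 1) * Pi α) < ∞ := by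
  have h10s : (0:ℝ) < (10:ℝ) ^ s := Real.rpow_pos_of_pos (by norm_num) s
  set c : ℝ := 1 / (2 * (10:ℝ) ^ s * K) with hc_def
  have hc : 0 < c := by positivity
  obtain ⟨A₀, hA₀⟩ := Filter.eventually_atTop.mp (hlim.eventually_lt_const hc)
  set A : ℝ := max A₀ 1 with hA_def
  have hA1 : (1:ℝ) ≤ A := le_max_right _ _
  have hA0 : (0:ℝ) < A := lt_of_lt_of_le one_pos hA1
  have hAc : ∀ y, A ≤ y → Pi y < c := fun y hy => hA₀ y (le_trans (le_max_left _ _) hy)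
  set F : ℝ → ℝ≥0∞ := fun α => ENNReal.ofReal (α ^ (s-1) * Pi α) with hF_def
  set G : ℝ → ℝ≥0∞ := fun α => ENNReal.ofReal (α ^ (s-1) * ε α) with hG_def
  have hFm : Measurable F :=
    ENNReal.measurable_ofReal.comp ((measurable_id.pow measurable_const).mul hPim)
  have hGm : Measurable G :=
    ENNReal.measurable_ofReal.comp ((measurable_id.pow measurable_const).mul hεm)
  -- finiteness on bounded intervals
  have hbdd : ∀ b : ℝ, 0 < b → ∫⁻ α in Ioc 0 b, F α < ∞ := by
    intro b hb
    have hint : IntervalIntegrable (fun x : ℝ => x ^ (s-1)) volume 0 b :=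
      intervalIntegral.intervalIntegrable_rpow' (by linarith)
    have hInt : IntegrableOn (fun x : ℝ => x ^ (s-1)) (Ioc 0 b) volume :=
      (intervalIntegrable_iff_integrableOn_Ioc_of_le hb.le).mp hint
    refine lt_of_le_of_lt
      (setLIntegral_mono (ENNReal.measurable_ofReal.comp (measurable_id.pow measurable_const)) ?_)
      hInt.lintegral_lt_top
    intro x hx
    exact ENNReal.ofReal_le_ofReal
      (mul_le_of_le_one_right (Real.rpow_nonneg hx.1.le _) (hPi1 x hx.1))
  -- key pointwise inequality
  have hkey : ∀ y : ℝ, A ≤ y →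
      10 * F (10*y) ≤ ENNReal.ofReal (1/2) * F y
        + ENNReal.ofReal ((10:ℝ)^s * (lam*K)) * G y := by
    intro y hy
    have hy0 : 0 < y := lt_of_lt_of_le hA0 hy
    have hys : 0 ≤ y ^ (s-1) := Real.rpow_nonneg hy0.le _
    have hreal : 10 * ((10*y) ^ (s-1) * Pi (10*y))
        ≤ (1/2) * (y ^ (s-1) * Pi y) + ((10:ℝ)^s * (lam*K)) * (y ^ (s-1) * ε y) := by
      have h1 : (10*y) ^ (s-1) = (10:ℝ)^(s-1) * y^(s-1) :=
        Real.mul_rpow (by norm_num) hy0.le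
      have h2 : (10:ℝ) ^ (1 + (s-1)) = (10:ℝ)^(1:ℝ) * (10:ℝ)^(s-1) :=
        Real.rpow_add (by norm_num) 1 (s-1)
      rw [show (1:ℝ)+(s-1) = s by ring, Real.rpow_one] at h2
      have h3 : Pi (10*y) ≤ K * (Pi y)^2 + lam * K * ε y := hrec y hy0
      have h4 : K * (Pi y)^2 ≤ K * (c * Pi y) := by
        nlinarith [mul_nonneg (mul_nonneg hK.le (hPi0 y hy0)) (sub_nonneg.mpr (hAc y hy).le)]
      have h5 : (10:ℝ)^s * (K * c) = 1/2 := by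
        rw [hc_def]; field_simp
      have h6 : Pi (10*y) ≤ K * (c * Pi y) + lam * K * ε y := le_trans h3 (by linarith)
      have h7 : y^(s-1) * Pi (10*y) ≤ y^(s-1) * (K * (c * Pi y) + lam * K * ε y) :=
        mul_le_mul_of_nonneg_left h6 hys
      have h8 : (10:ℝ)^s * (y^(s-1) * (K * (c * Pi y) + lam * K * ε y))
          = ((10:ℝ)^s * (K * c)) * (y^(s-1) * Pi y) + ((10:ℝ)^s * (lam*K)) * (y^(s-1) * ε y) := by
        ring
      rw [h5] at h8
      calc 10 * ((10*y) ^ (s-1) * Pi (10*y))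
          = (10:ℝ)^s * (y^(s-1) * Pi (10*y)) := by rw [h1, h2]; ring
        _ ≤ (10:ℝ)^s * (y^(s-1) * (K * (c * Pi y) + lam * K * ε y)) :=
            mul_le_mul_of_nonneg_left h7 h10s.le
        _ = (1/2) * (y^(s-1) * Pi y) + ((10:ℝ)^s * (lam*K)) * (y^(s-1) * ε y) := h8
    calc 10 * F (10*y) = ENNReal.ofReal (10 * ((10*y) ^ (s-1) * Pi (10*y))) := by
          rw [hF_def, show ((10:ℝ≥0∞)) = ENNReal.ofReal 10 by norm_num,
            ← ENNReal.ofReal_mul (by norm_num : (0:ℝ) ≤ 10)]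
      _ ≤ ENNReal.ofReal ((1/2) * (y ^ (s-1) * Pi y) + ((10:ℝ)^s * (lam*K)) * (y ^ (s-1) * ε y)) :=
          ENNReal.ofReal_le_ofReal hreal
      _ ≤ ENNReal.ofReal ((1/2) * (y ^ (s-1) * Pi y))
            + ENNReal.ofReal (((10:ℝ)^s * (lam*K)) * (y ^ (s-1) * ε y)) :=
          ENNReal.ofReal_add_le
      _ = ENNReal.ofReal (1/2) * F y + ENNReal.ofReal ((10:ℝ)^s * (lam*K)) * G y := by
          rw [ENNReal.ofReal_mul (by norm_num : (0:ℝ) ≤ 1/2),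
            ENNReal.ofReal_mul (by positivity : (0:ℝ) ≤ (10:ℝ)^s * (lam*K))]
  set Cε : ℝ≥0∞ := ENNReal.ofReal ((10:ℝ)^s * (lam*K)) * ∫⁻ α in Ioi (0:ℝ), G α with hCε_def
  set C0 : ℝ≥0∞ := ∫⁻ α in Ioc A (10*A), F α with hC0_def
  have hC0 : C0 < ∞ :=
    lt_of_le_of_lt (lintegral_mono_set (Ioc_subset_Ioc_left hA0.le)) (hbdd (10*A) (by linarith))
  have hCε : Cε < ∞ := ENNReal.mul_lt_top ENNReal.ofReal_lt_top hεint
  set Cc : ℝ≥0∞ := C0 + Cε with hCc_def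
  have hCc : Cc < ∞ := ENNReal.add_lt_top.mpr ⟨hC0, hCε⟩
  have hhalf : ENNReal.ofReal (1/2) * (2 * Cc) = Cc := by
    rw [← mul_assoc, show (2:ℝ≥0∞) = ENNReal.ofReal 2 by norm_num,
      ← ENNReal.ofReal_mul (by norm_num)]
    norm_num
  have key : ∀ n : ℕ, (∫⁻ α in Ioc A ((10:ℝ)^n * A), F α) ≤ 2 * Cc := by
    intro n
    induction n with
    | zero => simp
    | succ n ih =>
      have h10n : (1:ℝ) ≤ (10:ℝ)^n := one_le_pow₀ (by norm_num)
      have hsub : Ioc A ((10:ℝ)^(n+1) * A) ⊆ Ioc A (10*A) ∪ Ioc (10*A) (10*((10:ℝ)^n*A)) := by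
        rw [show (10:ℝ) * ((10:ℝ)^n*A) = (10:ℝ)^(n+1)*A by ring,
          Ioc_union_Ioc_eq_Ioc (by nlinarith) (by nlinarith [pow_succ (10:ℝ) n])]
      have step : ∫⁻ α in Ioc (10*A) (10*((10:ℝ)^n*A)), F α ≤ Cc + Cε := by
        rw [lint_scale10 F hFm]
        calc 10 * ∫⁻ y in Ioc A ((10:ℝ)^n*A), F (10*y)
            = ∫⁻ y in Ioc A ((10:ℝ)^n*A), 10 * F (10*y) :=
              (lintegral_const_mul' 10 _ (by norm_num)).symm
          _ ≤ ∫⁻ y in Ioc A ((10:ℝ)^n*A),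
                (ENNReal.ofReal (1/2) * F y + ENNReal.ofReal ((10:ℝ)^s * (lam*K)) * G y) := by
              refine setLIntegral_mono ((hFm.const_mul _).add (hGm.const_mul _)) ?_
              intro y hy
              exact hkey y hy.1.le
          _ = ENNReal.ofReal (1/2) * (∫⁻ y in Ioc A ((10:ℝ)^n*A), F y)
                + ENNReal.ofReal ((10:ℝ)^s * (lam*K)) * ∫⁻ y in Ioc A ((10:ℝ)^n*A), G y := by
              rw [lintegral_add_left (hFm.const_mul _)]
              rw [lintegral_const_mul' _ _ (by norm_num), lintegral_const_mul' _ _ (by norm_num)]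
          _ ≤ ENNReal.ofReal (1/2) * (2 * Cc) + Cε :=
              add_le_add (mul_le_mul_right ih _) (by
                rw [hCε_def]
                exact mul_le_mul_right
                  (lintegral_mono_set (fun x hx => lt_of_lt_of_le hA0 hx.1.le)) _)
          _ = Cc + Cε := by rw [hhalf]
      calc ∫⁻ α in Ioc A ((10:ℝ)^(n+1) * A), F α
          ≤ ∫⁻ α in Ioc A (10*A) ∪ Ioc (10*A) (10*((10:ℝ)^n*A)), F α :=
            lintegral_mono_set hsub
        _ ≤ C0 + ∫⁻ α in Ioc (10*A) (10*((10:ℝ)^n*A)), F α := lintegral_union_le _ _ _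
        _ ≤ C0 + (Cc + Cε) := add_le_add_right step C0
        _ = 2 * Cc := by rw [hCc_def]; ring
  -- pass to the limit over Ioc A (10^n A) ↑ Ioi A
  have hIoiA : ∫⁻ α in Ioi A, F α ≤ 2 * Cc := by
    have hU : ⋃ n : ℕ, Ioc A ((10:ℝ)^n * A) = Ioi A := by
      ext x
      simp only [mem_iUnion, mem_Ioc, mem_Ioi]
      constructor
      · rintro ⟨n, h1, _⟩; exact h1
      · intro hx
        obtain ⟨n, hn⟩ := pow_unbounded_of_one_lt (x / A) (by norm_num : (1:ℝ) < 10)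
        exact ⟨n, hx, by nlinarith [(div_lt_iff₀ hA0).mp hn]⟩
    have hmono : Monotone fun n : ℕ => Ioc A ((10:ℝ)^n * A) := by
      intro m n hmn
      exact Ioc_subset_Ioc_right (by
        have : (10:ℝ)^m ≤ (10:ℝ)^n := pow_le_pow_right₀ (by norm_num) hmn
        nlinarith)
    have hwd : ∀ (t : Set ℝ), MeasurableSet t →
        ∫⁻ α in t, F α = (volume.withDensity F) t :=
      fun t ht => (withDensity_apply F ht).symm
    rw [hwd _ measurableSet_Ioi, ← hU, hmono.directed_le.measure_iUnion]
    refine iSup_le fun n => ?_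
    rw [← hwd _ measurableSet_Ioc]
    exact key n
  -- assemble
  have hsplit : Ioi (0:ℝ) = Ioc 0 A ∪ Ioi A := (Ioc_union_Ioi_eq_Ioi hA0.le).symm
  calc ∫⁻ α in Ioi (0:ℝ), F α ≤ (∫⁻ α in Ioc 0 A, F α) + ∫⁻ α in Ioi A, F α := by
        rw [hsplit]; exact lintegral_union_le _ _ _
    _ < ∞ := ENNReal.add_lt_top.mpr ⟨hbdd A hA0,
        lt_of_le_of_lt hIoiA (by
          exact ENNReal.mul_lt_top (by norm_num) hCc)⟩
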